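/- Let A|B be an H-separable extension with B simple and A_B finitely generated projective. Then the centralizer R = C_A(B) is a simple ring that is finite dimensional over the center Z of A (Z being a field). -/

import Mathlib

open TensorProduct

noncomputable section

namespace D2

variable (A : Type*) [Ring A] (B : Subring A)

/-- The defining relations of `A ⊗_B A` as a quotient of `A ⊗_ℤ A`. -/
def relSub : Submodule ℤ (A ⊗[ℤ] A) :=
  Submodule.span ℤ {x | ∃ (a c : A) (b : B), x = (a * (b : A)) ⊗ₜ[ℤ] c - a ⊗ₜ[ℤ] ((b : A) * c)}

/-- The tensor square `A ⊗_B A` of a ring extension `B ⊆ A`. -/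
abbrev TensorSq := (A ⊗[ℤ] A) ⧸ relSub A B

/-- The class of a simple tensor `a ⊗_B c`. -/
def tmulB (a c : A) : TensorSq A B := Submodule.Quotient.mk (a ⊗ₜ[ℤ] c)

/-- Left multiplication `a₀ • (x ⊗ y) = (a₀ x) ⊗ y` on `A ⊗_B A`. -/
def lmul (a : A) : TensorSq A B →ₗ[ℤ] TensorSq A B :=
  Submodule.mapQ _ _ (TensorProduct.map (LinearMap.mulLeft ℤ a) LinearMap.id) (by
    rw [relSub, Submodule.span_le]
    rintro x ⟨a', c, b, rfl⟩
    simp only [SetLike.mem_coe, Submodule.mem_comap, map_sub, TensorProduct.map_tmul,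
      LinearMap.mulLeft_apply, LinearMap.id_apply]
    refine Submodule.subset_span ⟨a * a', c, b, by erw [map_sub, TensorProduct.map_tmul, TensorProduct.map_tmul]; simp [mul_assoc]⟩)

/-- Right multiplication `(x ⊗ y) • a₀ = x ⊗ (y a₀)` on `A ⊗_B A`. -/
def rmul (a : A) : TensorSq A B →ₗ[ℤ] TensorSq A B :=
  Submodule.mapQ _ _ (TensorProduct.map LinearMap.id (LinearMap.mulRight ℤ a)) (by
    rw [relSub, Submodule.span_le]
    rintro x ⟨a', c, b, rfl⟩
    simp only [SetLike.mem_coe, Submodule.mem_comap, map_sub, TensorProduct.map_tmul,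
      LinearMap.mulRight_apply, LinearMap.id_apply]
    refine Submodule.subset_span ⟨a', c * a, b, by erw [map_sub, TensorProduct.map_tmul, TensorProduct.map_tmul]; simp [mul_assoc]⟩)

/-- The multiplication map `A ⊗_B A → A`, `x ⊗ y ↦ x y`. -/
def mulQ : TensorSq A B →ₗ[ℤ] A :=
  Submodule.liftQ _ (LinearMap.mul' ℤ A) (by
    rw [relSub, Submodule.span_le]
    rintro x ⟨a, c, b, rfl⟩
    simp [LinearMap.mem_ker, mul_assoc]
    erw [LinearMap.mem_ker, map_sub, LinearMap.mul'_apply, LinearMap.mul'_apply]; simp [mul_assoc])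

/-- An element `t` of `A ⊗_B A` is `B`-central when `b t = t b` for all `b ∈ B`. -/
def IsBCentral (t : TensorSq A B) : Prop := ∀ b ∈ B, lmul A B b t = rmul A B b t

/-- An element `t` of `A ⊗_B A` is `A`-central (a Casimir element) when `a t = t a`. -/
def IsACentral (t : TensorSq A B) : Prop := ∀ a : A, lmul A B a t = rmul A B a t

/-- A `B`-`B`-bimodule endomorphism of `A`. -/
def IsBB (α : A →ₗ[ℤ] A) : Prop :=
  ∀ b ∈ B, ∀ a : A, α ((b : A) * a) = b * α a ∧ α (a * b) = α a * b

/-- A right `B`-module endomorphism of `A`. -/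
def IsRightB (f : A →ₗ[ℤ] A) : Prop := ∀ a : A, ∀ b ∈ B, f (a * b) = f a * b

/-- `x ↦ (x·) ⊗ id` as a linear map, used to build Sweedler-type expressions. -/
def lmulTen : A →ₗ[ℤ] (A ⊗[ℤ] A) →ₗ[ℤ] (A ⊗[ℤ] A) where
  toFun a := TensorProduct.map (LinearMap.mulLeft ℤ a) LinearMap.id
  map_add' a a' := by
    apply TensorProduct.ext'
    intro x y
    simp [add_mul, TensorProduct.add_tmul]
    rfl
  map_smul' z a := by
    apply TensorProduct.ext'
    intro x y
    simp only [TensorProduct.map_tmul, LinearMap.mulLeft_apply, LinearMap.id_apply,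
      LinearMap.smul_apply, RingHom.id_apply, smul_mul_assoc, TensorProduct.smul_tmul']
    rfl

/-- For `ζ = Σ u ⊗ v`, the map `a ↦ Σ α(a u) v`, i.e. `α(? ζ¹) ζ²`. -/
def sweed (α : A →ₗ[ℤ] A) (ζ : A ⊗[ℤ] A) : A →ₗ[ℤ] A :=
  ((LinearMap.mul' ℤ A).comp (TensorProduct.map α LinearMap.id)).comp ((lmulTen A).flip ζ)

/-- For `ζ = Σ u ⊗ v`, the element `Σ u r v` ("sandwich" evaluation `ζ¹ r ζ²`). -/
def sandw (r : A) (ζ : A ⊗[ℤ] A) : A :=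
  (LinearMap.mul' ℤ A) ((TensorProduct.map (LinearMap.mulRight ℤ r) LinearMap.id) ζ)

/-- `mul₂ ζ ξ = Σ (u x) ⊗ (y v)` for `ζ = Σ u ⊗ v`, `ξ = Σ x ⊗ y`:
the product `ξ ·_T ζ` of two elements of `T = (A ⊗_B A)^B` on representatives. -/
def mul₂ : (A ⊗[ℤ] A) →ₗ[ℤ] (A ⊗[ℤ] A) →ₗ[ℤ] (A ⊗[ℤ] A) :=
  TensorProduct.lift <| LinearMap.mk₂ ℤ
    (fun u v => TensorProduct.map (LinearMap.mulLeft ℤ u) (LinearMap.mulRight ℤ v))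
    (fun u u' v => by
      apply TensorProduct.ext'
      intro x y
      simp [add_mul, TensorProduct.add_tmul]
      rfl)
    (fun z u v => by
      apply TensorProduct.ext'
      intro x y
      simp only [TensorProduct.map_tmul, LinearMap.mulLeft_apply, LinearMap.mulRight_apply,
        LinearMap.smul_apply, smul_mul_assoc, TensorProduct.smul_tmul']
      rfl)
    (fun u v v' => by
      apply TensorProduct.ext'
      intro x y
      simp [mul_add, TensorProduct.tmul_add]
      rfl)
    (fun z u v => by
      apply TensorProduct.ext'
      intro x y
      simp only [TensorProduct.map_tmul, LinearMap.mulLeft_apply, LinearMap.mulRight_apply,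
        LinearMap.smul_apply, mul_smul_comm, TensorProduct.tmul_smul]
      rfl)

/-- `A` is balanced as a right `B`-module. -/
def RightBalanced : Prop :=
  ∀ φ : A →+ A,
    (∀ f : A →+ A, (∀ a : A, ∀ b ∈ B, f (a * b) = f a * b) → ∀ a, φ (f a) = f (φ a)) →
    ∃ b ∈ B, ∀ a, φ a = a * b

end D2

end


open TensorProduct

noncomputable section

/-- The center of `A` maps centrally into the centralizer of `B`, making the latter a
central algebra over the former. -/
def centAlg {A : Type*} [Ring A] (B : Subring A) :
    Algebra (Subring.center A) (Subring.centralizer (B : Set A)) :=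
  (Subring.inclusion (Subring.center_le_centralizer (B : Set A))).toAlgebra'
    (fun c x => Subtype.ext (by
      simpa using (Subring.mem_center_iff.mp c.2 (x : A)).symm))

attribute [local instance] centAlg
namespace Stmt13Aux

open TensorProduct

variable {A : Type*} [Ring A] {B : Subring A}

/-- `wmap f (u ⊗ v) = f u * v`. -/
def wmap (f : A →ₗ[ℤ] A) : A ⊗[ℤ] A →ₗ[ℤ] A :=
  (LinearMap.mul' ℤ A) ∘ₗ (TensorProduct.map f LinearMap.id)

@[simp] lemma wmap_tmul (f : A →ₗ[ℤ] A) (a c : A) : wmap f (a ⊗ₜ[ℤ] c) = f a * c := rfl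

lemma wmap_add (f g : A →ₗ[ℤ] A) (ζ : A ⊗[ℤ] A) :
    wmap (f + g) ζ = wmap f ζ + wmap g ζ := by
  induction ζ using TensorProduct.induction_on with
  | zero => simp
  | tmul x y => simp [add_mul]
  | add x y hx hy => simp only [map_add, hx, hy]; abel

lemma wmap_smul (z : ℤ) (f : A →ₗ[ℤ] A) (ζ : A ⊗[ℤ] A) :
    wmap (z • f) ζ = z • wmap f ζ := by
  induction ζ using TensorProduct.induction_on with
  | zero => simp
  | tmul x y => simp [mul_assoc]
  | add x y hx hy => simp only [map_add, hx, hy, smul_add]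

lemma wmap_mulLeft_comp (a : A) (f : A →ₗ[ℤ] A) :
    wmap (LinearMap.mulLeft ℤ a ∘ₗ f) = LinearMap.mulLeft ℤ a ∘ₗ wmap f := by
  apply TensorProduct.ext'
  intro u v
  exact mul_assoc _ _ _

lemma wmap_map_left (f : A →ₗ[ℤ] A) (a : A) :
    (wmap f) ∘ₗ (TensorProduct.map (LinearMap.mulLeft ℤ a) LinearMap.id)
      = wmap (f ∘ₗ LinearMap.mulLeft ℤ a) := by
  apply TensorProduct.ext'
  intro u v
  rfl

lemma wmap_map_right (f : A →ₗ[ℤ] A) (a : A) :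
    (wmap f) ∘ₗ (TensorProduct.map LinearMap.id (LinearMap.mulRight ℤ a))
      = (LinearMap.mulRight ℤ a) ∘ₗ wmap f := by
  apply TensorProduct.ext'
  intro u v
  exact (mul_assoc _ _ _).symm

/-- A linear functional vanishing on the defining relations kills `relSub`. -/
lemma vanish (F : A ⊗[ℤ] A →ₗ[ℤ] A)
    (hF : ∀ (a c : A) (b : B), F ((a * (b : A)) ⊗ₜ[ℤ] c) = F (a ⊗ₜ[ℤ] ((b : A) * c))) :
    ∀ ζ ∈ D2.relSub A B, F ζ = 0 := by
  intro ζ hζ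
  have hle : D2.relSub A B ≤ LinearMap.ker F := by
    rw [D2.relSub, Submodule.span_le]
    rintro x ⟨a, c, b, rfl⟩
    simp [LinearMap.mem_ker, hF a c b]
  exact hle hζ

lemma congrF (F : A ⊗[ℤ] A →ₗ[ℤ] A)
    (hF : ∀ (a c : A) (b : B), F ((a * (b : A)) ⊗ₜ[ℤ] c) = F (a ⊗ₜ[ℤ] ((b : A) * c)))
    {ζ ξ : A ⊗[ℤ] A}
    (h : (Submodule.Quotient.mk ζ : D2.TensorSq A B) = Submodule.Quotient.mk ξ) :
    F ζ = F ξ := by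
  have := vanish F hF (ζ - ξ) ((Submodule.Quotient.eq _).mp h)
  rw [map_sub] at this
  exact sub_eq_zero.mp this

lemma lmul_mk (a : A) (ζ : A ⊗[ℤ] A) :
    D2.lmul A B a (Submodule.Quotient.mk ζ)
      = Submodule.Quotient.mk
        (TensorProduct.map (LinearMap.mulLeft ℤ a) LinearMap.id ζ) := by
  rfl

lemma rmul_mk (a : A) (ζ : A ⊗[ℤ] A) :
    D2.rmul A B a (Submodule.Quotient.mk ζ)
      = Submodule.Quotient.mk
        (TensorProduct.map LinearMap.id (LinearMap.mulRight ℤ a) ζ) := by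
  rfl

end Stmt13Aux
namespace Stmt13Aux

open TensorProduct LinearMap

section System

variable {A : Type*} [Ring A] {B : Subring A}
variable {n : ℕ} {e : Fin n → A ⊗[ℤ] A} {r : Fin n → A}

lemma casimir_eq (hce : ∀ i, D2.IsACentral A B (Submodule.Quotient.mk (e i)))
    (F : A ⊗[ℤ] A →ₗ[ℤ] A)
    (hF : ∀ (a c : A) (b : B), F ((a * (b : A)) ⊗ₜ[ℤ] c) = F (a ⊗ₜ[ℤ] ((b : A) * c)))
    (i : Fin n) (a : A) :
    F (TensorProduct.map (LinearMap.mulLeft ℤ a) LinearMap.id (e i))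
      = F (TensorProduct.map LinearMap.id (LinearMap.mulRight ℤ a) (e i)) := by
  apply congrF F hF
  rw [← lmul_mk, ← rmul_mk]
  exact hce i a

lemma sys_eq
    (hsys : ∑ i, D2.lmul A B (r i) (Submodule.Quotient.mk (e i)) = D2.tmulB A B 1 1)
    (F : A ⊗[ℤ] A →ₗ[ℤ] A)
    (hF : ∀ (a c : A) (b : B), F ((a * (b : A)) ⊗ₜ[ℤ] c) = F (a ⊗ₜ[ℤ] ((b : A) * c))) :
    ∑ i, F (TensorProduct.map (LinearMap.mulLeft ℤ (r i)) LinearMap.id (e i))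
      = F ((1 : A) ⊗ₜ[ℤ] (1 : A)) := by
  rw [← map_sum]
  apply congrF F hF
  have : (Submodule.Quotient.mk
      (∑ i, TensorProduct.map (LinearMap.mulLeft ℤ (r i)) LinearMap.id (e i)) :
        D2.TensorSq A B)
      = ∑ i, D2.lmul A B (r i) (Submodule.Quotient.mk (e i)) := by
    rw [show (Submodule.Quotient.mk : A ⊗[ℤ] A → D2.TensorSq A B)
        = (D2.relSub A B).mkQ from rfl, map_sum]
    exact Finset.sum_congr rfl fun i _ => (lmul_mk (r i) (e i)).symm
  rw [this, hsys]
  rfl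

lemma hF_of_rightB (f : A →ₗ[ℤ] A) (hf : D2.IsRightB A B f) (x : A) :
    ∀ (a c : A) (b : B),
      wmap (f ∘ₗ LinearMap.mulLeft ℤ x) ((a * (b : A)) ⊗ₜ[ℤ] c)
        = wmap (f ∘ₗ LinearMap.mulLeft ℤ x) (a ⊗ₜ[ℤ] ((b : A) * c)) := by
  intro a c b
  simp only [wmap_tmul, LinearMap.comp_apply, LinearMap.mulLeft_apply]
  rw [← mul_assoc x a (b : A), hf (x * a) (b : A) b.2, mul_assoc]

lemma rlin (hce : ∀ i, D2.IsACentral A B (Submodule.Quotient.mk (e i)))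
    (f : A →ₗ[ℤ] A) (hf : D2.IsRightB A B f) (i : Fin n) (x a : A) :
    wmap (f ∘ₗ LinearMap.mulLeft ℤ (x * a)) (e i)
      = wmap (f ∘ₗ LinearMap.mulLeft ℤ x) (e i) * a := by
  have h := casimir_eq hce _ (hF_of_rightB f hf x) i a
  erw [← LinearMap.comp_apply, wmap_map_left, ← LinearMap.comp_apply, wmap_map_right] at h
  rw [LinearMap.comp_assoc, ← LinearMap.mulLeft_mul] at h
  exact h

lemma starstar (hce : ∀ i, D2.IsACentral A B (Submodule.Quotient.mk (e i)))
    (hsys : ∑ i, D2.lmul A B (r i) (Submodule.Quotient.mk (e i)) = D2.tmulB A B 1 1)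
    (f : A →ₗ[ℤ] A) (hf : D2.IsRightB A B f) (x : A) :
    f x = ∑ i, wmap f (e i) * (x * r i) := by
  have h := sys_eq hsys _ (hF_of_rightB f hf x)
  rw [wmap_tmul] at h
  simp only [LinearMap.comp_apply, LinearMap.mulLeft_apply, mul_one] at h
  rw [← h]
  refine Finset.sum_congr rfl fun i _ => ?_
  erw [← LinearMap.comp_apply, wmap_map_left, LinearMap.comp_assoc, ← LinearMap.mulLeft_mul]
  have h2 := rlin hce f hf i 1 (x * r i)
  rw [one_mul] at h2
  erw [h2, LinearMap.mulLeft_one, LinearMap.comp_id]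

lemma hF_of_centralizer {t : A} (ht : t ∈ Subring.centralizer (B : Set A)) :
    ∀ (a c : A) (b : B),
      wmap (LinearMap.mulRight ℤ t) ((a * (b : A)) ⊗ₜ[ℤ] c)
        = wmap (LinearMap.mulRight ℤ t) (a ⊗ₜ[ℤ] ((b : A) * c)) := by
  intro a c b
  have hb := Subring.mem_centralizer_iff.mp ht (b : A) b.2
  simp only [wmap_tmul, LinearMap.mulRight_apply]
  rw [mul_assoc a (b : A) t, hb]
  simp [mul_assoc]

lemma phi_central (hce : ∀ i, D2.IsACentral A B (Submodule.Quotient.mk (e i)))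
    {t : A} (ht : t ∈ Subring.centralizer (B : Set A)) (i : Fin n) (a : A) :
    a * wmap (LinearMap.mulRight ℤ t) (e i) = wmap (LinearMap.mulRight ℤ t) (e i) * a := by
  have h := casimir_eq hce _ (hF_of_centralizer ht) i a
  erw [← LinearMap.comp_apply, wmap_map_left, ← LinearMap.comp_apply, wmap_map_right] at h
  have hcomm : (LinearMap.mulRight ℤ t) ∘ₗ (LinearMap.mulLeft ℤ a)
      = (LinearMap.mulLeft ℤ a) ∘ₗ (LinearMap.mulRight ℤ t) :=
    LinearMap.ext fun y => mul_assoc a y t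
  rw [hcomm, wmap_mulLeft_comp] at h
  exact h

lemma rightB_mulRight {t : A} (ht : t ∈ Subring.centralizer (B : Set A)) :
    D2.IsRightB A B (LinearMap.mulRight ℤ t) := by
  intro a b hb
  have := Subring.mem_centralizer_iff.mp ht b hb
  simp only [LinearMap.mulRight_apply]
  rw [mul_assoc, this, ← mul_assoc]

/-- The clover identity: for `t ∈ R`, `x * t = ∑ i, φ_i(t) * (x * r i)`. -/
lemma clover (hce : ∀ i, D2.IsACentral A B (Submodule.Quotient.mk (e i)))
    (hsys : ∑ i, D2.lmul A B (r i) (Submodule.Quotient.mk (e i)) = D2.tmulB A B 1 1)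
    {t : A} (ht : t ∈ Subring.centralizer (B : Set A)) (x : A) :
    x * t = ∑ i, wmap (LinearMap.mulRight ℤ t) (e i) * (x * r i) := by
  simpa using starstar hce hsys _ (rightB_mulRight ht) x

lemma wmap_mulRight_add (t t' : A) (ζ : A ⊗[ℤ] A) :
    wmap (LinearMap.mulRight ℤ (t + t')) ζ
      = wmap (LinearMap.mulRight ℤ t) ζ + wmap (LinearMap.mulRight ℤ t') ζ := by
  have : LinearMap.mulRight ℤ (t + t')
      = LinearMap.mulRight ℤ t + LinearMap.mulRight ℤ t' :=
    LinearMap.ext fun y => mul_add y t t'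
  rw [this, wmap_add]

lemma wmap_mulRight_central (z t : A) (hz : ∀ g : A, g * z = z * g) :
    ∀ ζ : A ⊗[ℤ] A, wmap (LinearMap.mulRight ℤ (z * t)) ζ
      = z * wmap (LinearMap.mulRight ℤ t) ζ := by
  intro ζ
  have : wmap (LinearMap.mulRight ℤ (z * t))
      = LinearMap.mulLeft ℤ z ∘ₗ wmap (LinearMap.mulRight ℤ t) := by
    apply TensorProduct.ext'
    intro u v
    show u * (z * t) * v = z * (u * t * v)
    rw [← mul_assoc u z t, hz u]
    simp [mul_assoc]
  rw [this]
  rfl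

end System

end Stmt13Aux
namespace Stmt13Aux

open TensorProduct LinearMap

section Main

variable {A : Type*} [Ring A] {B : Subring A}
variable {n : ℕ} {e : Fin n → A ⊗[ℤ] A} {r : Fin n → A}

lemma nontrivialA (hBsimple : IsSimpleRing B) : Nontrivial A := by
  haveI : Nontrivial B := inferInstance
  refine ⟨1, 0, fun h => one_ne_zero (α := B) (Subtype.coe_injective ?_)⟩
  simpa using h

lemma Asimple (hBsimple : IsSimpleRing B)
    {N : ℕ} (aB : Fin N → A) (fB : Fin N → (A →ₗ[ℤ] A))
    (hfB : ∀ j, D2.IsRightB A B (fB j)) (hfBval : ∀ j a, fB j a ∈ B)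
    (hdb : ∀ a : A, a = ∑ j, aB j * fB j a)
    (hce : ∀ i, D2.IsACentral A B (Submodule.Quotient.mk (e i)))
    (hsys : ∑ i, D2.lmul A B (r i) (Submodule.Quotient.mk (e i)) = D2.tmulB A B 1 1) :
    IsSimpleRing A := by
  haveI : Nontrivial A := nontrivialA hBsimple
  apply IsSimpleRing.of_eq_bot_or_eq_top
  intro I
  by_cases hI : I = ⊥
  · left; exact hI
  right
  obtain ⟨a, haI, ha⟩ : ∃ a, a ∈ I ∧ a ≠ 0 := by
    by_contra hc
    push_neg at hc
    refine hI (SetLike.ext fun x => ?_)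
    simp only [TwoSidedIdeal.mem_bot]
    exact ⟨fun hx => hc x hx, fun hx => hx ▸ I.zero_mem⟩
  obtain ⟨j, hj⟩ : ∃ j, fB j a ≠ 0 := by
    by_contra hc; push_neg at hc
    apply ha; rw [hdb a]
    simp [hc]
  have hmem : fB j a ∈ I := by
    rw [starstar hce hsys (fB j) (hfB j) a]
    refine sum_mem fun i _ => ?_
    exact I.mul_mem_left _ _ (I.mul_mem_right _ _ haI)
  -- the two-sided ideal of B of elements landing in I
  set JB : TwoSidedIdeal B := TwoSidedIdeal.mk' {b : B | (b : A) ∈ I}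
    (by simp)
    (fun hx hy => by simpa using I.add_mem hx hy)
    (fun hx => by simpa using I.neg_mem hx)
    (fun {x y} hy => by simpa using I.mul_mem_left _ _ hy)
    (fun {x y} hx => by simpa using I.mul_mem_right _ _ hx) with hJB
  have hb0 : (⟨fB j a, hfBval j a⟩ : B) ∈ JB := by
    rw [hJB, TwoSidedIdeal.mem_mk']
    exact hmem
  have hJBne : JB ≠ ⊥ := by
    intro h
    rw [h, TwoSidedIdeal.mem_bot] at hb0
    exact hj (by simpa using congrArg (Subtype.val) hb0)
  have hJBtop : JB = ⊤ := (hBsimple.simple.eq_bot_or_eq_top JB).resolve_left hJBne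
  have h1 : ((1 : B) : A) ∈ I := by
    have : (1 : B) ∈ JB := hJBtop ▸ TwoSidedIdeal.mem_top _
    rwa [hJB, TwoSidedIdeal.mem_mk'] at this
  exact TwoSidedIdeal.eq_top I (by simpa using h1)

lemma Zfield (hAsimple : IsSimpleRing A) : IsField (Subring.center A) := by
  haveI : Nontrivial A := inferInstance
  refine ⟨⟨0, 1, fun h => one_ne_zero (α := A) (by simpa using (congrArg Subtype.val h).symm)⟩,
    fun {x y} => Subtype.ext (by
      simpa using (Subring.mem_center_iff.mp y.2 (x : A))), fun {z} hz => ?_⟩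
  have hzA : (z : A) ≠ 0 := fun h => hz (Subtype.ext (by simpa using h))
  have hzc : ∀ g : A, g * (z : A) = (z : A) * g := Subring.mem_center_iff.mp z.2
  set Iz : TwoSidedIdeal A := TwoSidedIdeal.mk' {x : A | ∃ a, x = (z : A) * a}
    (⟨0, by simp⟩)
    (fun ⟨a, ha⟩ ⟨b, hb⟩ => ⟨a + b, by rw [ha, hb, mul_add]⟩)
    (fun ⟨a, ha⟩ => ⟨-a, by rw [ha, mul_neg]⟩)
    (fun {x y} ⟨a, ha⟩ => ⟨x * a, by rw [ha, ← mul_assoc, hzc x, mul_assoc]⟩)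
    (fun {x y} ⟨a, ha⟩ => ⟨a * y, by rw [ha, mul_assoc]⟩) with hIz
  have hzmem : (z : A) ∈ Iz := by
    rw [hIz, TwoSidedIdeal.mem_mk']
    exact ⟨1, by simp⟩
  have hIzne : Iz ≠ ⊥ := fun h => hzA (by rwa [h, TwoSidedIdeal.mem_bot] at hzmem)
  have hIztop : Iz = ⊤ := (hAsimple.simple.eq_bot_or_eq_top Iz).resolve_left hIzne
  obtain ⟨a, ha⟩ : ∃ a, (1 : A) = (z : A) * a := by
    have : (1 : A) ∈ Iz := hIztop ▸ TwoSidedIdeal.mem_top _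
    rwa [hIz, TwoSidedIdeal.mem_mk'] at this
  have hac : a ∈ Subring.center A := by
    rw [Subring.mem_center_iff]
    intro g
    have h1 : a * (z : A) = 1 := by rw [hzc a, ← ha]
    calc g * a = (a * (z:A)) * (g * a) := by rw [h1, one_mul]
      _ = a * ((z:A) * g) * a := by noncomm_ring
      _ = a * (g * (z:A)) * a := by rw [hzc g]
      _ = (a * g) * ((z:A) * a) := by noncomm_ring
      _ = a * g := by rw [← ha, mul_one]
  exact ⟨⟨a, hac⟩, Subtype.ext (by simpa using ha.symm)⟩

end Main

end Stmt13Aux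
namespace Stmt13Aux

open TensorProduct LinearMap

section Main2

variable {A : Type*} [Ring A] {B : Subring A}
variable {n : ℕ} {e : Fin n → A ⊗[ℤ] A} {r : Fin n → A}

lemma phi_mem_center (hce : ∀ i, D2.IsACentral A B (Submodule.Quotient.mk (e i)))
    {t : A} (ht : t ∈ Subring.centralizer (B : Set A)) (i : Fin n) :
    wmap (LinearMap.mulRight ℤ t) (e i) ∈ Subring.center A :=
  Subring.mem_center_iff.mpr (phi_central hce ht i)

lemma repr_clover (hce : ∀ i, D2.IsACentral A B (Submodule.Quotient.mk (e i)))
    (hsys : ∑ i, D2.lmul A B (r i) (Submodule.Quotient.mk (e i)) = D2.tmulB A B 1 1)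
    {t : A} (ht : t ∈ Subring.centralizer (B : Set A)) :
    t = ∑ i, wmap (LinearMap.mulRight ℤ t) (e i) * r i := by
  simpa using clover hce hsys ht 1

attribute [local instance] centAlg

lemma finiteR (hce : ∀ i, D2.IsACentral A B (Submodule.Quotient.mk (e i)))
    (hr : ∀ i, r i ∈ Subring.centralizer (B : Set A))
    (hsys : ∑ i, D2.lmul A B (r i) (Submodule.Quotient.mk (e i)) = D2.tmulB A B 1 1) :
    Module.Finite (Subring.center A) (Subring.centralizer (B : Set A)) := by
  classical
  constructor
  refine ⟨Finset.univ.image (fun i => (⟨r i, hr i⟩ : Subring.centralizer (B : Set A))), ?_⟩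
  rw [Finset.coe_image, Finset.coe_univ, Set.image_univ, eq_top_iff]
  rintro s -
  rw [Submodule.mem_span_range_iff_exists_fun]
  refine ⟨fun i => ⟨wmap (LinearMap.mulRight ℤ ((s : A))) (e i), phi_mem_center hce s.2 i⟩, ?_⟩
  apply Subtype.coe_injective
  beta_reduce
  rw [AddSubmonoidClass.coe_finset_sum]
  have hterm : ∀ i : Fin n,
      (((⟨wmap (LinearMap.mulRight ℤ ((s : A))) (e i), phi_mem_center hce s.2 i⟩ :
          Subring.center A) •
        (⟨r i, hr i⟩ : Subring.centralizer (B : Set A)) :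
          Subring.centralizer (B : Set A)) : A)
        = wmap (LinearMap.mulRight ℤ ((s : A))) (e i) * r i := fun i => rfl
  rw [Finset.sum_congr rfl fun i _ => hterm i]
  exact (repr_clover hce hsys s.2).symm

end Main2

end Stmt13Aux
namespace Stmt13Aux

open TensorProduct LinearMap

section Main3

variable {A : Type*} [Ring A] {B : Subring A}
variable {n : ℕ} {e : Fin n → A ⊗[ℤ] A} {r : Fin n → A}

attribute [local instance] centAlg

set_option maxHeartbeats 1000000 in
set_option synthInstance.maxHeartbeats 400000 in
lemma Rsimple (hBsimple : IsSimpleRing B)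
    {N : ℕ} (aB : Fin N → A) (fB : Fin N → (A →ₗ[ℤ] A))
    (hfB : ∀ j, D2.IsRightB A B (fB j)) (hfBval : ∀ j a, fB j a ∈ B)
    (hdb : ∀ a : A, a = ∑ j, aB j * fB j a)
    (hce : ∀ i, D2.IsACentral A B (Submodule.Quotient.mk (e i)))
    (hr : ∀ i, r i ∈ Subring.centralizer (B : Set A))
    (hsys : ∑ i, D2.lmul A B (r i) (Submodule.Quotient.mk (e i)) = D2.tmulB A B 1 1)
    (hZ : IsField (Subring.center A)) :
    IsSimpleRing (Subring.centralizer (B : Set A)) := by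
  classical
  haveI : Nontrivial A := nontrivialA hBsimple
  letI : Field (Subring.center A) := hZ.toField
  haveI : Nontrivial (Subring.centralizer (B : Set A)) :=
    ⟨1, 0, fun h => one_ne_zero (α := A) (by simpa using congrArg Subtype.val h)⟩
  apply IsSimpleRing.of_eq_bot_or_eq_top
  intro J
  by_cases hJbot : J = ⊥
  · left; exact hJbot
  right
  by_contra hJtop
  obtain ⟨s₀, hs₀J, hs₀⟩ : ∃ s, s ∈ J ∧ s ≠ 0 := by
    by_contra hc
    push_neg at hc
    refine hJbot (SetLike.ext fun x => ?_)
    simp only [TwoSidedIdeal.mem_bot]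
    exact ⟨fun hx => hc x hx, fun hx => hx ▸ J.zero_mem⟩
  -- J as Z-submodule of R
  set J' : Submodule (Subring.center A) (Subring.centralizer (B : Set A)) :=
    { carrier := {x | x ∈ J}
      add_mem' := fun hx hy => J.add_mem hx hy
      zero_mem' := J.zero_mem
      smul_mem' := fun z x hx => by
        show z • x ∈ J
        rw [Algebra.smul_def]
        exact J.mul_mem_left _ _ hx } with hJ'def
  -- the coordinates map Φ
  set Φ : (Subring.centralizer (B : Set A)) →ₗ[Subring.center A]
      (Fin n → Subring.center A) :=
    { toFun := fun s i => ⟨wmap (LinearMap.mulRight ℤ ((s : A))) (e i),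
        phi_mem_center hce s.2 i⟩
      map_add' := fun s s' => funext fun i => Subtype.ext (by
        push_cast
        exact wmap_mulRight_add _ _ _)
      map_smul' := fun z s => funext fun i => Subtype.ext (by
        have hz : ∀ g : A, g * (z : A) = (z : A) * g := Subring.mem_center_iff.mp z.2
        have h1 : (((z • s) : Subring.centralizer (B : Set A)) : A) = (z : A) * (s : A) := by
          rw [Algebra.smul_def]; rfl
        show wmap (LinearMap.mulRight ℤ (((z • s) : Subring.centralizer (B:Set A)) : A)) (e i)
            = (z : A) * wmap (LinearMap.mulRight ℤ ((s : A))) (e i)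
        rw [h1]
        exact wmap_mulRight_central _ _ hz _) } with hΦdef
  have hΦker : LinearMap.ker Φ = ⊥ := by
    rw [LinearMap.ker_eq_bot']
    intro s hs
    apply Subtype.coe_injective
    have h0 : ∀ i, wmap (LinearMap.mulRight ℤ ((s : A))) (e i) = 0 := fun i => by
      have := congrFun hs i
      simpa [hΦdef, Subtype.ext_iff] using this
    have := repr_clover hce hsys s.2
    simp only [h0, zero_mul, Finset.sum_const_zero] at this
    simpa using this
  obtain ⟨g, hg⟩ := LinearMap.exists_leftInverse_of_injective Φ hΦker
  -- the functional ε vanishing on J with ε 1 = 1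
  have h1J : (1 : Subring.centralizer (B : Set A)) ∉ J := fun h => hJtop (TwoSidedIdeal.eq_top J h)
  set π := J'.mkQ with hπdef
  have hπ1 : π 1 ≠ 0 := fun h => h1J (by
    rwa [hπdef, Submodule.mkQ_apply, Submodule.Quotient.mk_eq_zero] at h)
  set ι : (Subring.center A) →ₗ[Subring.center A] _ :=
    LinearMap.toSpanSingleton (Subring.center A) _ (π 1) with hιdef
  have hιker : LinearMap.ker ι = ⊥ := by
    rw [LinearMap.ker_eq_bot']
    intro z hz
    by_contra hz0
    apply hπ1
    have h2 := congrArg (fun w => z⁻¹ • w) hz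
    simpa [hιdef, LinearMap.toSpanSingleton_apply, smul_smul,
      inv_mul_cancel₀ hz0] using h2
  obtain ⟨δ, hδ⟩ := LinearMap.exists_leftInverse_of_injective ι hιker
  set ε : (Subring.centralizer (B : Set A)) →ₗ[Subring.center A] (Subring.center A) :=
    δ ∘ₗ π with hεdef
  have hε1 : ε 1 = 1 := by
    have h3 : ι 1 = π 1 := by
      rw [hιdef, LinearMap.toSpanSingleton_apply, one_smul]
    have := congrFun (congrArg (fun f => f.toFun) hδ) 1
    rw [hεdef]
    simp only [LinearMap.coe_comp, Function.comp_apply]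
    rw [← h3]
    simpa using this
  have hεJ : ∀ x, x ∈ J → ε x = 0 := by
    intro x hx
    have hx' : π x = 0 := by
      rw [hπdef, Submodule.mkQ_apply, Submodule.Quotient.mk_eq_zero]
      exact hx
    rw [hεdef]
    simp [hx']
  set ε' := ε ∘ₗ g with hε'def
  set zc : Fin n → (Subring.center A) := fun i => ε' (fun j => if i = j then 1 else 0)
    with hzcdef
  have hεeq : ∀ s, ε s = ∑ i, Φ s i * zc i := by
    intro s
    have h4 : ε' (Φ s) = ε s := by
      rw [hε'def]
      simp only [LinearMap.coe_comp, Function.comp_apply]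
      rw [show g (Φ s) = s from congrFun (congrArg (fun f => f.toFun) hg) s]
    rw [← h4, LinearMap.pi_apply_eq_sum_univ ε' (Φ s)]
    exact Finset.sum_congr rfl fun i _ => by rw [smul_eq_mul, hzcdef]
  -- choose j₀ with fB j₀ s ≠ 0
  have hsA : ((s₀ : A)) ≠ 0 := fun h => hs₀ (Subtype.coe_injective (by simpa using h))
  obtain ⟨j₀, hj₀⟩ : ∃ j, fB j ((s₀ : A)) ≠ 0 := by
    by_contra hc; push_neg at hc
    exact hsA (by rw [hdb ((s₀ : A))]; simp [hc])
  set b₀ : B := ⟨fB j₀ ((s₀ : A)), hfBval j₀ _⟩ with hb₀def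
  set gens : Set B := {y | ∃ β β' : B, y = β * b₀ * β'} with hgensdef
  have hmull : ∀ (x : B) {y}, y ∈ AddSubgroup.closure gens →
      x * y ∈ AddSubgroup.closure gens := by
    intro x y hy
    refine AddSubgroup.closure_induction
      (p := fun y _ => x * y ∈ AddSubgroup.closure gens) ?_ ?_ ?_ ?_ hy
    · rintro z ⟨β, β', rfl⟩
      exact AddSubgroup.subset_closure ⟨x * β, β', by noncomm_ring⟩
    · simpa using (AddSubgroup.closure gens).zero_mem
    · intro a b _ _ pa pb
      rw [mul_add]; exact add_mem pa pb
    · intro a _ pa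
      rw [mul_neg]; exact neg_mem pa
  have hmulr : ∀ (x : B) {y}, y ∈ AddSubgroup.closure gens →
      y * x ∈ AddSubgroup.closure gens := by
    intro x y hy
    refine AddSubgroup.closure_induction
      (p := fun y _ => y * x ∈ AddSubgroup.closure gens) ?_ ?_ ?_ ?_ hy
    · rintro z ⟨β, β', rfl⟩
      exact AddSubgroup.subset_closure ⟨β, β' * x, by noncomm_ring⟩
    · simpa using (AddSubgroup.closure gens).zero_mem
    · intro a b _ _ pa pb
      rw [add_mul]; exact add_mem pa pb
    · intro a _ pa
      rw [neg_mul]; exact neg_mem pa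
  set JB : TwoSidedIdeal B := TwoSidedIdeal.mk' {y : B | y ∈ AddSubgroup.closure gens}
    ((AddSubgroup.closure gens).zero_mem)
    (fun hx hy => (AddSubgroup.closure gens).add_mem hx hy)
    (fun hx => (AddSubgroup.closure gens).neg_mem hx)
    (fun {x y} hy => hmull x hy)
    (fun {x y} hx => hmulr y hx) with hJBdef
  have hb₀cl : b₀ ∈ AddSubgroup.closure gens :=
    AddSubgroup.subset_closure ⟨1, 1, by simp⟩
  have hJBne : JB ≠ ⊥ := by
    intro h
    have : b₀ ∈ JB := by rw [hJBdef, TwoSidedIdeal.mem_mk']; exact hb₀cl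
    rw [h, TwoSidedIdeal.mem_bot] at this
    exact hj₀ (by simpa [hb₀def] using congrArg Subtype.val this)
  have hJBtop : JB = ⊤ := (hBsimple.simple.eq_bot_or_eq_top JB).resolve_left hJBne
  have h1cl : (1 : B) ∈ AddSubgroup.closure gens := by
    have : (1 : B) ∈ JB := hJBtop ▸ TwoSidedIdeal.mem_top _
    rwa [hJBdef, TwoSidedIdeal.mem_mk'] at this
  -- the submodule T of the endomorphism ring
  set t : Fin n → Fin n → A := fun i l => r i * (s₀ : A) * r l with htdef
  have htR : ∀ i l, t i l ∈ Subring.centralizer (B : Set A) := fun i l =>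
    mul_mem (mul_mem (hr i) s₀.2) (hr l)
  have htJ : ∀ i l, (⟨t i l, htR i l⟩ : Subring.centralizer (B : Set A)) ∈ J := by
    intro i l
    have heq : (⟨t i l, htR i l⟩ : Subring.centralizer (B : Set A))
        = (⟨r i, hr i⟩ : Subring.centralizer (B : Set A)) * s₀ * ⟨r l, hr l⟩ :=
      Subtype.coe_injective rfl
    rw [heq]
    exact J.mul_mem_right _ _ (J.mul_mem_left _ _ hs₀J)
  set T : Submodule ℤ (Module.End ℤ A) := Submodule.span ℤ
    {F | ∃ (i l : Fin n) (a : A),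
      F = (LinearMap.mulLeft ℤ a) ∘ₗ (LinearMap.mulRight ℤ (t i l))} with hTdef
  set Fmap : B → Module.End ℤ A :=
    fun b => ∑ j, (LinearMap.mulLeft ℤ (aB j * (b : A))) ∘ₗ (fB j) with hFdef
  have hFmem : ∀ b ∈ AddSubgroup.closure gens, Fmap b ∈ T := by
    intro b hb
    refine AddSubgroup.closure_induction (p := fun y _ => Fmap y ∈ T) ?_ ?_ ?_ ?_ hb
    · rintro y ⟨β, β', rfl⟩
      set θ : Fin N → (A →ₗ[ℤ] A) :=
        fun j => (LinearMap.mulLeft ℤ (aB j * (β : A))) ∘ₗ (fB j₀) with hθdef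
      set θ' : Fin N → (A →ₗ[ℤ] A) :=
        fun j => (LinearMap.mulLeft ℤ ((β' : A))) ∘ₗ (fB j) with hθ'def
      have hθB : ∀ j, D2.IsRightB A B (θ j) := by
        intro j a b hb
        simp only [hθdef, LinearMap.comp_apply, LinearMap.mulLeft_apply]
        rw [hfB j₀ a b hb]
        simp [mul_assoc]
      have hθ'B : ∀ j, D2.IsRightB A B (θ' j) := by
        intro j a b hb
        simp only [hθ'def, LinearMap.comp_apply, LinearMap.mulLeft_apply]
        rw [hfB j a b hb]
        simp [mul_assoc]
      have hkey : ∀ j x, (aB j * ((β * b₀ * β' : B) : A)) * fB j x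
          = ∑ i, ∑ l, (wmap (θ j) (e l) * wmap (θ' j) (e i)) * (x * t i l) := by
        intro j x
        have hbmem : ((β' : A) * fB j x) ∈ B := B.mul_mem β'.2 (hfBval j x)
        have hcomm : ((β' : A) * fB j x) * (s₀ : A) = (s₀ : A) * ((β' : A) * fB j x) :=
          Subring.mem_centralizer_iff.mp s₀.2 _ hbmem
        have hrBl : fB j₀ ((s₀ : A) * ((β' : A) * fB j x))
            = fB j₀ (s₀ : A) * ((β' : A) * fB j x) := by
          have := hfB j₀ (s₀ : A) ((β' : A) * fB j x) hbmem
          simpa using this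
        have e1 : (aB j * ((β * b₀ * β' : B) : A)) * fB j x = (θ j) ((θ' j x) * (s₀ : A)) := by
          simp only [hθdef, hθ'def, LinearMap.comp_apply, LinearMap.mulLeft_apply,
            Subring.coe_mul, hb₀def]
          rw [hcomm, hrBl]
          simp [mul_assoc]
        rw [e1]
        rw [starstar hce hsys (θ' j) (hθ'B j) x]
        rw [Finset.sum_mul, map_sum]
        rw [Finset.sum_congr rfl fun i _ => starstar hce hsys (θ j) (hθB j) _]
        refine Finset.sum_congr rfl fun i _ => Finset.sum_congr rfl fun l _ => ?_
        rw [htdef]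
        simp [mul_assoc]
      have hgenEq : Fmap (β * b₀ * β') = ∑ j, ∑ i, ∑ l,
          (LinearMap.mulLeft ℤ (wmap (θ j) (e l) * wmap (θ' j) (e i))) ∘ₗ
            (LinearMap.mulRight ℤ (t i l)) := by
        rw [hFdef]
        apply LinearMap.ext; intro x
        simp only [LinearMap.coe_sum, Finset.sum_apply, LinearMap.comp_apply,
          LinearMap.mulLeft_apply, LinearMap.mulRight_apply]
        exact Finset.sum_congr rfl fun j _ => by
          simpa using hkey j x
      rw [hgenEq]
      exact sum_mem fun j _ => sum_mem fun i _ => sum_mem fun l _ =>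
        Submodule.subset_span ⟨i, l, _, rfl⟩
    · show Fmap 0 ∈ T
      have h0 : Fmap 0 = 0 := by
        rw [hFdef]; apply LinearMap.ext; intro x; simp
      rw [h0]; exact T.zero_mem
    · intro y y' _ _ py py'
      show Fmap (y + y') ∈ T
      have hadd : Fmap (y + y') = Fmap y + Fmap y' := by
        rw [hFdef]; apply LinearMap.ext; intro x
        simp [mul_add, add_mul, Finset.sum_add_distrib, mul_assoc]
      rw [hadd]; exact T.add_mem py py'
    · intro y _ py
      show Fmap (-y) ∈ T
      have hneg : Fmap (-y) = -(Fmap y) := by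
        rw [hFdef]; apply LinearMap.ext; intro x
        simp [mul_neg, neg_mul, mul_assoc]
      rw [hneg]; exact T.neg_mem py
  -- the evaluation functional Ψ
  set Ψ : Module.End ℤ A →ₗ[ℤ] A :=
    { toFun := fun F => ∑ i, ((zc i : A)) * wmap F (e i)
      map_add' := fun F G => by
        show (∑ i, ((zc i : A)) * wmap (F + G) (e i))
            = (∑ i, ((zc i : A)) * wmap F (e i)) + (∑ i, ((zc i : A)) * wmap G (e i))
        rw [← Finset.sum_add_distrib]
        exact Finset.sum_congr rfl fun i _ => by rw [wmap_add, mul_add]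
      map_smul' := fun z F => by
        show (∑ i, ((zc i : A)) * wmap (z • F) (e i))
            = z • ∑ i, ((zc i : A)) * wmap F (e i)
        rw [Finset.smul_sum]
        exact Finset.sum_congr rfl fun i _ => by rw [wmap_smul, mul_smul_comm] } with hΨdef
  have hTker : T ≤ LinearMap.ker Ψ := by
    rw [hTdef, Submodule.span_le]
    rintro F ⟨i0, l0, a, rfl⟩
    simp only [SetLike.mem_coe, LinearMap.mem_ker]
    have h5 : (∑ i, Φ (⟨t i0 l0, htR i0 l0⟩) i * zc i) = 0 := by
      rw [← hεeq]; exact hεJ _ (htJ i0 l0)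
    have h6 : (∑ i, wmap (LinearMap.mulRight ℤ (t i0 l0)) (e i) * (zc i : A)) = 0 := by
      have h5' := congrArg Subtype.val h5
      rw [AddSubmonoidClass.coe_finset_sum] at h5'
      simpa [hΦdef] using h5'
    show (∑ i, (zc i : A) * wmap ((LinearMap.mulLeft ℤ a) ∘ₗ
        (LinearMap.mulRight ℤ (t i0 l0))) (e i)) = 0
    have hstep : ∀ i : Fin n, (zc i : A) * wmap ((LinearMap.mulLeft ℤ a) ∘ₗ
        (LinearMap.mulRight ℤ (t i0 l0))) (e i)
        = a * (wmap (LinearMap.mulRight ℤ (t i0 l0)) (e i) * (zc i : A)) := by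
      intro i
      have hw : wmap ((LinearMap.mulLeft ℤ a) ∘ₗ (LinearMap.mulRight ℤ (t i0 l0))) (e i)
          = a * wmap (LinearMap.mulRight ℤ (t i0 l0)) (e i) := by
        rw [wmap_mulLeft_comp]; rfl
      have hzcA : ∀ g : A, g * (zc i : A) = (zc i : A) * g :=
        Subring.mem_center_iff.mp (zc i).2
      rw [hw, ← hzcA (a * wmap (LinearMap.mulRight ℤ (t i0 l0)) (e i)), mul_assoc]
    rw [Finset.sum_congr rfl fun i _ => hstep i, ← Finset.mul_sum, h6, mul_zero]
  have hid : LinearMap.id ∈ T := by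
    have h7 : Fmap 1 = LinearMap.id := by
      rw [hFdef]; apply LinearMap.ext; intro x
      simp only [LinearMap.coe_sum, Finset.sum_apply, LinearMap.comp_apply,
        LinearMap.mulLeft_apply, OneMemClass.coe_one, mul_one, LinearMap.id_coe, id_eq]
      exact (hdb x).symm
    rw [← h7]
    exact hFmem 1 h1cl
  have hΨ0 : Ψ LinearMap.id = 0 := hTker hid
  have hΨ1 : Ψ LinearMap.id = 1 := by
    have h9 := congrArg Subtype.val (hεeq 1)
    rw [AddSubmonoidClass.coe_finset_sum] at h9
    rw [hε1] at h9
    have h10 : (1 : A) = ∑ i, wmap LinearMap.id (e i) * (zc i : A) := by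
      have hone : (((1 : Subring.centralizer (B : Set A)) : A)) = (1 : A) := rfl
      simpa [hΦdef, hone, LinearMap.mulRight_one] using h9
    show (∑ i, (zc i : A) * wmap LinearMap.id (e i)) = 1
    rw [h10]
    refine Finset.sum_congr rfl fun i _ => ?_
    exact (Subring.mem_center_iff.mp (zc i).2 _).symm
  exact one_ne_zero (α := A) (by rw [← hΨ1, hΨ0])


end Main3

end Stmt13Aux

/-- an H-separable extension of a simple ring `B` with `A_B` f.g. projective
has simple centralizer `R = C_A(B)`, finite dimensional over the center `Z` of `A`,
which is a field. -/
theorem stmt13 {A : Type*} [Ring A] (B : Subring A)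
    (hBsimple : IsSimpleRing B)
    (N : ℕ) (aB : Fin N → A) (fB : Fin N → (A →ₗ[ℤ] A))
    (hfB : ∀ j, D2.IsRightB A B (fB j)) (hfBval : ∀ j a, fB j a ∈ B)
    (hdb : ∀ a : A, a = ∑ j, aB j * fB j a)
    (n : ℕ) (e : Fin n → A ⊗[ℤ] A) (r : Fin n → A)
    (hce : ∀ i, D2.IsACentral A B (Submodule.Quotient.mk (e i)))
    (hr : ∀ i, r i ∈ Subring.centralizer (B : Set A))
    (hsys : ∑ i, D2.lmul A B (r i) (Submodule.Quotient.mk (e i)) = D2.tmulB A B 1 1) :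
    IsSimpleRing (Subring.centralizer (B : Set A)) ∧
    IsField (Subring.center A) ∧
    Module.Finite (Subring.center A) (Subring.centralizer (B : Set A)) := by
  have hA : IsSimpleRing A := Stmt13Aux.Asimple hBsimple aB fB hfB hfBval hdb hce hsys
  have hZ : IsField (Subring.center A) := Stmt13Aux.Zfield hA
  exact ⟨Stmt13Aux.Rsimple hBsimple aB fB hfB hfBval hdb hce hr hsys hZ, hZ,
    Stmt13Aux.finiteR hce hr hsys⟩

end
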